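/- Fix α, β ∈ (0,1] and γ > 0. Consider the problem of maximizing P(|X−Y| ≤ γ) over pairs of independent real-valued random variables X, Y having Lebesgue densities f_X, f_Y satisfying f_X(x) ≤ α⁻¹ 1_{[0,1]}(x) and f_Y(y) ≤ β⁻¹ 1_{[0,1]}(y) for all x, y. Then an optimizer is given by X uniformly distributed on [(1−α)/2, (1+α)/2] and Y uniformly distributed on [(1−β)/2, (1+β)/2]. -/

import Mathlib

open MeasureTheory Set Filter Topology

noncomputable section

/-- The uniform distribution on `[a,b]`. -/
def unifIcc (a b : ℝ) : Measure ℝ :=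
  (ENNReal.ofReal (b - a))⁻¹ • volume.restrict (Icc a b)

open scoped ENNReal NNReal

/-!
Write `P(|X - Y| ≤ γ) = ∫ w_ν dμ`, where `μ, ν` are the laws of `X, Y` and
`w_ν x = ν [x - γ, x + γ]`; let `u, v` be the two uniform laws. Since `μ` has mass one and
density at most `α⁻¹`, the bathtub bound `∫ w dμ ≤ s + α⁻¹ ∫ (w - s)⁺` holds for every level
`s`. For `μ = u` and `w = w_v` it is an equality when `s` is the value of `w_v` at the endpoints
of the support of `u`, because `w_v` is a nonincreasing function of `|x - 1/2|`.

It remains to show `∫ (w_ν - s)⁺ ≤ ∫ (w_v - s)⁺`. Both windows have total mass `2γ`, so this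
is `∫ min w_v s ≤ ∫ min w_ν s`, i.e. by the layer-cake formula a comparison on `(0, s)` of the
level-set measures `λ(t) = |{w > t}|`. As `w_ν` is `β⁻¹`-Lipschitz, `λ_ν(t) + 2βt` is
nonincreasing as long as `{w_ν > t}` is nonempty, whereas `λ_v(t) + 2βt` is constant up to the
maximum of `w_v`, which bounds `w_ν` too. Hence `λ_ν - λ_v` changes sign at most once, from `+`
to `-`, and together with the equal total masses this gives the comparison.
-/

lemma lintegral_le_add_mul_lintegral_tsub {α : Type*} [MeasurableSpace α] {μ ν : Measure α}
    [IsProbabilityMeasure μ] {c : ℝ≥0∞} (hμ : μ ≤ c • ν) (w : α → ℝ≥0∞) (s : ℝ≥0∞) :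
    ∫⁻ x, w x ∂μ ≤ s + c * ∫⁻ x, (w x - s) ∂ν :=
  calc ∫⁻ x, w x ∂μ ≤ ∫⁻ x, (s + (w x - s)) ∂μ := lintegral_mono fun _ => le_add_tsub
    _ = s + ∫⁻ x, (w x - s) ∂μ := by
      rw [lintegral_add_left measurable_const, lintegral_const, measure_univ, mul_one]
    _ ≤ s + c * ∫⁻ x, (w x - s) ∂ν := by
      rw [← smul_eq_mul, ← lintegral_smul_measure]
      gcongr

lemma lintegral_tsub_le_of_lintegral_min_le {α : Type*} [MeasurableSpace α] {μ : Measure α}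
    {w w' : α → ℝ≥0∞} (hw : Measurable w) (hw' : Measurable w') (s : ℝ≥0∞)
    (htot : ∫⁻ x, w x ∂μ = ∫⁻ x, w' x ∂μ) (hfin : ∫⁻ x, w' x ∂μ ≠ ∞)
    (hmin : ∫⁻ x, min (w' x) s ∂μ ≤ ∫⁻ x, min (w x) s ∂μ) :
    ∫⁻ x, (w x - s) ∂μ ≤ ∫⁻ x, (w' x - s) ∂μ := by
  have hsplit : ∀ u : α → ℝ≥0∞, Measurable u →
      ∫⁻ x, u x ∂μ = ∫⁻ x, (u x - s) ∂μ + ∫⁻ x, min (u x) s ∂μ := fun u hu => by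
    rw [← lintegral_add_right _ (hu.min measurable_const)]
    simp only [tsub_add_min]
  have hfin' : ∫⁻ x, min (w' x) s ∂μ ≠ ∞ :=
    ne_top_of_le_ne_top hfin (lintegral_mono fun _ => min_le_left _ _)
  refine ENNReal.le_of_add_le_add_right hfin' ?_
  calc ∫⁻ x, (w x - s) ∂μ + ∫⁻ x, min (w' x) s ∂μ
      ≤ ∫⁻ x, (w x - s) ∂μ + ∫⁻ x, min (w x) s ∂μ := by gcongr
    _ = ∫⁻ x, (w' x - s) ∂μ + ∫⁻ x, min (w' x) s ∂μ := by
      rw [← hsplit w hw, ← hsplit w' hw', htot]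

lemma lintegral_ofReal_min_eq {α : Type*} [MeasurableSpace α] (μ : Measure α) {f : α → ℝ}
    (hf0 : 0 ≤ f) (hfm : Measurable f) {s : ℝ} (hs : 0 ≤ s) :
    ∫⁻ x, ENNReal.ofReal (min (f x) s) ∂μ = ∫⁻ t in Ioo 0 s, μ {x | t < f x} := by
  have hlevel : ∀ t,
      μ {x | t < min (f x) s} = (Iio s).indicator (fun t => μ {x | t < f x}) t := fun t => by
    by_cases ht : t < s <;> simp [ht]
  rw [lintegral_eq_lintegral_meas_lt μ (ae_of_all _ fun x => le_min (hf0 x) hs)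
      (hfm.min measurable_const).aemeasurable]
  simp_rw [hlevel]
  rw [setLIntegral_indicator measurableSet_Iio, inter_comm, Ioi_inter_Iio]

lemma setLIntegral_Ioo_le_of_crossing {u v : ℝ → ℝ≥0∞} (s : ℝ)
    (htot : ∫⁻ t in Ioi 0, v t ≤ ∫⁻ t in Ioi 0, u t) (hv : ∫⁻ t in Ioi 0, v t ≠ ∞)
    (hcross : ∀ t t', 0 < t → t < t' → u t < v t → u t' ≤ v t') :
    ∫⁻ t in Ioo 0 s, v t ≤ ∫⁻ t in Ioo 0 s, u t := by
  by_cases hle : ∀ t ∈ Ioo 0 s, v t ≤ u t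
  · exact setLIntegral_mono' measurableSet_Ioo hle
  push Not at hle
  obtain ⟨t₀, ⟨ht₀, ht₀s⟩, hlt⟩ := hle
  have hsplit : ∀ w : ℝ → ℝ≥0∞,
      ∫⁻ t in Ioi 0, w t = (∫⁻ t in Ioo 0 s, w t) + ∫⁻ t in Ici s, w t := fun w => by
    rw [← lintegral_union measurableSet_Ici
      ((Iio_disjoint_Ici le_rfl).mono_left Ioo_subset_Iio_self),
      Ioo_union_Ici_eq_Ioi (ht₀.trans ht₀s)]
  have htail : ∫⁻ t in Ici s, u t ≤ ∫⁻ t in Ici s, v t :=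
    setLIntegral_mono' measurableSet_Ici fun t ht =>
      hcross t₀ t ht₀ (ht₀s.trans_le ht) hlt
  have hfin : ∫⁻ t in Ici s, v t ≠ ∞ :=
    ne_top_of_le_ne_top hv (lintegral_mono_set (Ici_subset_Ioi.2 (ht₀.trans ht₀s)))
  refine ENNReal.le_of_add_le_add_right hfin ?_
  calc (∫⁻ t in Ioo 0 s, v t) + ∫⁻ t in Ici s, v t
      ≤ (∫⁻ t in Ioo 0 s, u t) + ∫⁻ t in Ici s, u t := by rw [← hsplit, ← hsplit]; exact htot
    _ ≤ (∫⁻ t in Ioo 0 s, u t) + ∫⁻ t in Ici s, v t := by gcongr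

lemma volume_setOf_lt_add_le {φ : ℝ → ℝ} {K : ℝ≥0} (hK : 0 < K) (hφ : LipschitzWith K φ)
    {σ σ' : ℝ} (hσ : σ ≤ σ') (hne : {x | σ' < φ x}.Nonempty)
    (hbdd : Bornology.IsBounded {x | σ' < φ x}) :
    volume {x | σ' < φ x} + ENNReal.ofReal (2 * ((σ' - σ) / K)) ≤ volume {x | σ < φ x} := by
  set S := {x | σ' < φ x}
  set δ := (σ' - σ) / K
  have hK' : (0 : ℝ) < K := hK
  have hδ : 0 ≤ δ := div_nonneg (sub_nonneg.2 hσ) hK'.le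
  -- `{σ < φ}` contains `S` and the intervals of length `δ` beyond its extreme points,
  -- where `φ ≥ σ'` by continuity.
  have near : ∀ z y, σ' ≤ φ z → dist y z < δ → σ < φ y := by
    intro z y hz hyz
    have h₁ := hφ.dist_le_mul y z
    have h₂ : K * dist y z < σ' - σ := by
      calc (K : ℝ) * dist y z < K * δ := by gcongr
        _ = σ' - σ := mul_div_cancel₀ _ hK'.ne'
    rw [Real.dist_eq] at h₁
    linarith [neg_abs_le (φ y - φ z)]
  have hcl : closure S ⊆ {x | σ' ≤ φ x} :=
    closure_minimal (fun x (hx : σ' < φ x) => hx.le) (isClosed_le continuous_const hφ.continuous)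
  set zp := sSup S
  set zm := sInf S
  have hzp : σ' ≤ φ zp := hcl (csSup_mem_closure hne hbdd.bddAbove)
  have hzm : σ' ≤ φ zm := hcl (csInf_mem_closure hne hbdd.bddBelow)
  have hS : S ⊆ Icc zm zp := fun x hx => ⟨csInf_le hbdd.bddBelow hx, le_csSup hbdd.bddAbove hx⟩
  have hsub : S ∪ Ioo zp (zp + δ) ∪ Ioo (zm - δ) zm ⊆ {x | σ < φ x} := by
    refine union_subset (union_subset (fun x hx => lt_of_le_of_lt hσ hx) ?_) ?_
    · rintro y ⟨h₁, h₂⟩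
      exact near zp y hzp (by rw [Real.dist_eq, abs_of_pos (by linarith)]; linarith)
    · rintro y ⟨h₁, h₂⟩
      exact near zm y hzm (by rw [Real.dist_eq, abs_of_neg (by linarith)]; linarith)
  have hd₁ : Disjoint S (Ioo zp (zp + δ)) :=
    disjoint_left.2 fun x hx hx' => (hS hx).2.not_gt hx'.1
  have hd₂ : Disjoint (S ∪ Ioo zp (zp + δ)) (Ioo (zm - δ) zm) := by
    refine disjoint_left.2 fun x hx hx' => ?_
    rcases hx with hx | hx
    · exact (hS hx).1.not_gt hx'.2
    · have hzz : zm ≤ zp := (hS hne.some_mem).1.trans (hS hne.some_mem).2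
      linarith [hx.1, hx'.2]
  calc volume S + ENNReal.ofReal (2 * δ)
      = volume (S ∪ Ioo zp (zp + δ) ∪ Ioo (zm - δ) zm) := by
        rw [measure_union hd₂ measurableSet_Ioo, measure_union hd₁ measurableSet_Ioo,
          Real.volume_Ioo, Real.volume_Ioo, add_assoc, ← ENNReal.ofReal_add (by linarith)
          (by linarith)]
        ring_nf
    _ ≤ volume {x | σ < φ x} := measure_mono hsub

lemma isProbabilityMeasure_withDensity_ofReal {α : Type*} [MeasurableSpace α] {μ : Measure α}
    {f : α → ℝ} (hf0 : ∀ x, 0 ≤ f x) (hf1 : ∫ x, f x ∂μ = 1) :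
    IsProbabilityMeasure (μ.withDensity fun x => ENNReal.ofReal (f x)) := by
  constructor
  rw [withDensity_apply _ MeasurableSet.univ, Measure.restrict_univ,
    ← ofReal_integral_eq_lintegral_ofReal (.of_integral_ne_zero (by simp [hf1]))
      (ae_of_all _ hf0), hf1, ENNReal.ofReal_one]

lemma withDensity_ofReal_le_smul_restrict {α : Type*} [MeasurableSpace α] {μ : Measure α}
    {S : Set α} (hS : MeasurableSet S) {f : α → ℝ} {c : ℝ}
    (hf : ∀ x, f x ≤ c * S.indicator 1 x) :
    μ.withDensity (fun x => ENNReal.ofReal (f x)) ≤ ENNReal.ofReal c • μ.restrict S := by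
  rw [← withDensity_const, ← withDensity_indicator hS]
  refine withDensity_mono (ae_of_all _ fun x => ?_)
  by_cases hx : x ∈ S <;> simpa [hx] using ENNReal.ofReal_le_ofReal (hf x)

lemma preimage_strip_mk_left (γ x : ℝ) :
    Prod.mk x ⁻¹' {p : ℝ × ℝ | |p.1 - p.2| ≤ γ} = Icc (x - γ) (x + γ) := by
  ext y
  simp only [mem_preimage, mem_ofPred_eq, mem_Icc, abs_le]
  constructor <;> rintro ⟨h₁, h₂⟩ <;> constructor <;> linarith

lemma preimage_strip_mk_right (γ y : ℝ) :
    (fun x => (x, y)) ⁻¹' {p : ℝ × ℝ | |p.1 - p.2| ≤ γ} = Icc (y - γ) (y + γ) := by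
  ext x
  simp only [mem_preimage, mem_ofPred_eq, mem_Icc, abs_le]
  constructor <;> rintro ⟨h₁, h₂⟩ <;> constructor <;> linarith

lemma measurableSet_strip (γ : ℝ) : MeasurableSet {p : ℝ × ℝ | |p.1 - p.2| ≤ γ} :=
  measurableSet_le (continuous_fst.sub continuous_snd).abs.measurable measurable_const

lemma prod_strip_eq_lintegral (μ ν : Measure ℝ) [SFinite ν] (γ : ℝ) :
    (μ.prod ν) {p : ℝ × ℝ | |p.1 - p.2| ≤ γ} = ∫⁻ x, ν (Icc (x - γ) (x + γ)) ∂μ := by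
  simp only [Measure.prod_apply (measurableSet_strip γ), preimage_strip_mk_left]

lemma lintegral_measure_Icc_sub_add (ν : Measure ℝ) [SFinite ν] (γ : ℝ) :
    ∫⁻ x, ν (Icc (x - γ) (x + γ)) = ENNReal.ofReal (2 * γ) * ν univ := by
  rw [← prod_strip_eq_lintegral, Measure.prod_apply_symm (measurableSet_strip γ)]
  simp only [preimage_strip_mk_right, Real.volume_Icc]
  rw [← lintegral_const]
  congr with y
  ring_nf

def window (ν : Measure ℝ) (γ x : ℝ) : ℝ := ν.real (Icc (x - γ) (x + γ))

section window

variable {ν : Measure ℝ} {γ : ℝ} {K : ℝ≥0}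

lemma measure_Icc_le_measure_Icc_add (hν : ν ≤ (K : ℝ≥0∞) • volume) (x y : ℝ) :
    ν (Icc (x - γ) (x + γ)) ≤ ν (Icc (y - γ) (y + γ)) + K * ENNReal.ofReal |x - y| := by
  obtain ⟨J, hJ, hJvol⟩ : ∃ J, Icc (x - γ) (x + γ) ⊆ Icc (y - γ) (y + γ) ∪ J ∧
      volume J = ENNReal.ofReal |x - y| := by
    rcases le_total x y with h | h
    · refine ⟨Icc (x - γ) (y - γ), fun z hz => ?_, by
        rw [Real.volume_Icc, abs_of_nonpos (by linarith)]; ring_nf⟩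
      by_cases hz' : y - γ ≤ z
      · exact Or.inl ⟨hz', by linarith [hz.2]⟩
      · exact Or.inr ⟨hz.1, by linarith⟩
    · refine ⟨Icc (y + γ) (x + γ), fun z hz => ?_, by
        rw [Real.volume_Icc, abs_of_nonneg (by linarith)]; ring_nf⟩
      by_cases hz' : z ≤ y + γ
      · exact Or.inl ⟨by linarith [hz.1], hz'⟩
      · exact Or.inr ⟨by linarith, hz.2⟩
  calc ν (Icc (x - γ) (x + γ)) ≤ ν (Icc (y - γ) (y + γ)) + ν J :=
        (measure_mono hJ).trans (measure_union_le _ _)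
    _ ≤ ν (Icc (y - γ) (y + γ)) + K * ENNReal.ofReal |x - y| := by
        gcongr
        have := hν J
        rwa [Measure.smul_apply, hJvol, smul_eq_mul] at this

lemma lipschitzWith_window [IsFiniteMeasure ν] (hν : ν ≤ (K : ℝ≥0∞) • volume) :
    LipschitzWith K (window ν γ) := by
  refine LipschitzWith.of_le_add_mul K fun x y => ?_
  have h := ENNReal.toReal_mono (by finiteness) (measure_Icc_le_measure_Icc_add (γ := γ) hν x y)
  rwa [ENNReal.toReal_add (by finiteness) (by finiteness), ENNReal.toReal_mul,
    ENNReal.toReal_ofReal (abs_nonneg _), ENNReal.coe_toReal, ← Real.dist_eq] at h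

lemma measurable_window [IsFiniteMeasure ν] (hν : ν ≤ (K : ℝ≥0∞) • volume) :
    Measurable (window ν γ) :=
  (lipschitzWith_window hν).continuous.measurable

lemma window_nonneg (x : ℝ) : 0 ≤ window ν γ x := measureReal_nonneg

lemma window_le_one [IsProbabilityMeasure ν] (x : ℝ) : window ν γ x ≤ 1 := measureReal_le_one

lemma window_le_mul (hγ : 0 ≤ γ) (hν : ν ≤ (K : ℝ≥0∞) • volume) (x : ℝ) :
    window ν γ x ≤ K * (2 * γ) := by
  have h := hν (Icc (x - γ) (x + γ))
  rw [Measure.smul_apply, Real.volume_Icc, smul_eq_mul] at h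
  have := ENNReal.toReal_mono (by finiteness) h
  rwa [ENNReal.toReal_mul, ENNReal.toReal_ofReal (by linarith), ENNReal.coe_toReal,
    show x + γ - (x - γ) = 2 * γ by ring] at this

lemma ofReal_window [IsFiniteMeasure ν] (x : ℝ) :
    ENNReal.ofReal (window ν γ x) = ν (Icc (x - γ) (x + γ)) :=
  ofReal_measureReal

lemma lintegral_ofReal_window [IsProbabilityMeasure ν] :
    ∫⁻ x, ENNReal.ofReal (window ν γ x) = ENNReal.ofReal (2 * γ) := by
  simp_rw [ofReal_window, lintegral_measure_Icc_sub_add, measure_univ, mul_one]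

lemma lintegral_volume_setOf_lt_window [IsProbabilityMeasure ν] (hν : ν ≤ (K : ℝ≥0∞) • volume) :
    ∫⁻ t in Ioi 0, volume {x | t < window ν γ x} = ENNReal.ofReal (2 * γ) := by
  rw [← lintegral_eq_lintegral_meas_lt _ (ae_of_all _ fun _ => window_nonneg _)
    (measurable_window hν).aemeasurable, lintegral_ofReal_window]

lemma setOf_lt_window_subset {a b t : ℝ} (ht : 0 ≤ t)
    (hν : ν ≤ (K : ℝ≥0∞) • volume.restrict (Icc a b)) :
    {x | t < window ν γ x} ⊆ Icc (a - γ) (b + γ) := by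
  intro x hx
  by_contra hout
  have hdisj : Icc (x - γ) (x + γ) ∩ Icc a b = ∅ := by
    simp only [mem_Icc, not_and_or, not_le] at hout
    ext z
    simp only [mem_inter_iff, mem_Icc, mem_empty_iff_false, iff_false]
    rintro ⟨⟨h₁, h₂⟩, h₃, h₄⟩
    rcases hout with h | h <;> linarith
  have h0 : ν (Icc (x - γ) (x + γ)) = 0 := by
    have := hν (Icc (x - γ) (x + γ))
    rwa [Measure.smul_apply, Measure.restrict_apply measurableSet_Icc, hdisj, measure_empty,
      smul_zero, nonpos_iff_eq_zero] at this
  have : window ν γ x = 0 := by simp [window, measureReal_def, h0]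
  exact absurd hx (by simp [this, ht])

end window

instance (a b : ℝ) : SFinite (unifIcc a b) := by
  unfold unifIcc
  infer_instance

lemma isProbabilityMeasure_unifIcc {a b : ℝ} (hab : a < b) :
    IsProbabilityMeasure (unifIcc a b) :=
  ⟨by rw [unifIcc, Measure.smul_apply, Measure.restrict_apply_univ, Real.volume_Icc, smul_eq_mul,
    ENNReal.inv_mul_cancel (by simpa using hab) ENNReal.ofReal_ne_top]⟩

lemma unifIcc_le_smul_volume {a b : ℝ} (hab : a < b) :
    unifIcc a b ≤ ((b - a)⁻¹.toNNReal : ℝ≥0∞) • volume := by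
  rw [unifIcc, ← ENNReal.ofReal_inv_of_pos (sub_pos.2 hab)]
  exact smul_le_smul_left _ Measure.restrict_le_self

lemma lintegral_unifIcc_eq {a b : ℝ} (hab : a < b) {w : ℝ → ℝ≥0∞} {s : ℝ≥0∞}
    (hin : ∀ x ∈ Icc a b, s ≤ w x) (hout : ∀ x ∉ Icc a b, w x ≤ s) :
    ∫⁻ x, w x ∂(unifIcc a b) = s + (ENNReal.ofReal (b - a))⁻¹ * ∫⁻ x, (w x - s) := by
  have hsupp : (fun x => w x - s).support ⊆ Icc a b := fun x hx => by
    by_contra h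
    exact hx (tsub_eq_zero_of_le (hout x h))
  have hI : ∫⁻ x in Icc a b, w x = s * ENNReal.ofReal (b - a) + ∫⁻ x, (w x - s) :=
    calc ∫⁻ x in Icc a b, w x = ∫⁻ x in Icc a b, (s + (w x - s)) :=
          setLIntegral_congr_fun measurableSet_Icc fun x hx =>
            (add_tsub_cancel_of_le (hin x hx)).symm
      _ = s * ENNReal.ofReal (b - a) + ∫⁻ x, (w x - s) := by
          rw [lintegral_add_left measurable_const, setLIntegral_const, Real.volume_Icc,
            setLIntegral_eq_of_support_subset hsupp]
  rw [unifIcc, lintegral_smul_measure, hI, smul_eq_mul, mul_add, mul_left_comm,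
    ENNReal.inv_mul_cancel (by simpa using hab) ENNReal.ofReal_ne_top, mul_one]

lemma min_sub_max_eq (x c γ β : ℝ) :
    min (x + γ) (c + β / 2) - max (x - γ) (c - β / 2)
      = min (min (2 * γ) β) (γ + β / 2 - |x - c|) := by
  rcases le_total x c with h | h
  · rw [abs_of_nonpos (by linarith)]
    simp only [min_def, max_def]
    split_ifs <;> linarith
  · rw [abs_of_nonneg (by linarith)]
    simp only [min_def, max_def]
    split_ifs <;> linarith

lemma window_unifIcc {β : ℝ} (hβ : 0 < β) (c γ x : ℝ) :
    window (unifIcc (c - β / 2) (c + β / 2)) γ x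
      = max (min (min (2 * γ) β) (γ + β / 2 - |x - c|)) 0 / β := by
  rw [window, unifIcc, measureReal_def, Measure.smul_apply,
    Measure.restrict_apply measurableSet_Icc, Icc_inter_Icc, Real.volume_Icc, smul_eq_mul,
    ENNReal.toReal_mul, ENNReal.toReal_inv,
    show c + β / 2 - (c - β / 2) = β by ring, ENNReal.toReal_ofReal hβ.le,
    ENNReal.toReal_ofReal', min_sub_max_eq]
  ring

lemma window_unifIcc_le_of_abs_le {β : ℝ} (hβ : 0 < β) (c γ : ℝ) {x y : ℝ}
    (h : |x - c| ≤ |y - c|) :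
    window (unifIcc (c - β / 2) (c + β / 2)) γ y
      ≤ window (unifIcc (c - β / 2) (c + β / 2)) γ x := by
  rw [window_unifIcc hβ, window_unifIcc hβ]
  gcongr

lemma volume_setOf_lt_window_unifIcc {β : ℝ} (hβ : 0 < β) (c γ : ℝ) {t : ℝ} (ht : 0 < t)
    (ht₁ : t < 1) (htγ : β * t < 2 * γ) :
    volume {x | t < window (unifIcc (c - β / 2) (c + β / 2)) γ x}
      = ENNReal.ofReal (2 * (γ + β / 2 - β * t)) := by
  rw [← Real.volume_ball c]
  congr 1
  ext x
  have hβt : 0 < β * t := by positivity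
  simp only [mem_ofPred_eq, window_unifIcc hβ, lt_div_iff₀ hβ, Metric.mem_ball, Real.dist_eq,
    lt_max_iff, lt_min_iff, mul_comm t β]
  constructor
  · rintro (⟨_, h⟩ | h) <;> linarith
  · intro h
    exact Or.inl ⟨⟨htγ, by nlinarith⟩, by linarith⟩

lemma lintegral_unifIcc_window_eq {α β : ℝ} (hα : 0 < α) (hβ : 0 < β) (c γ : ℝ) :
    ∫⁻ x, unifIcc (c - β / 2) (c + β / 2) (Icc (x - γ) (x + γ)) ∂unifIcc (c - α / 2) (c + α / 2)
      = ENNReal.ofReal (window (unifIcc (c - β / 2) (c + β / 2)) γ (c + α / 2))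
        + ENNReal.ofReal α⁻¹ * ∫⁻ x, (unifIcc (c - β / 2) (c + β / 2) (Icc (x - γ) (x + γ))
          - ENNReal.ofReal (window (unifIcc (c - β / 2) (c + β / 2)) γ (c + α / 2))) := by
  have := isProbabilityMeasure_unifIcc (show c - β / 2 < c + β / 2 by linarith)
  have hend : |c + α / 2 - c| = α / 2 := by rw [add_sub_cancel_left, abs_of_pos (by positivity)]
  rw [lintegral_unifIcc_eq (by linarith), show c + α / 2 - (c - α / 2) = α by ring,
    ENNReal.ofReal_inv_of_pos hα]
  · intro x hx
    rw [← ofReal_window]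
    refine ENNReal.ofReal_le_ofReal (window_unifIcc_le_of_abs_le hβ c γ ?_)
    rw [hend, abs_sub_comm]
    exact mem_Icc_iff_abs_le.2 hx
  · intro x hx
    rw [← ofReal_window]
    refine ENNReal.ofReal_le_ofReal (window_unifIcc_le_of_abs_le hβ c γ ?_)
    rw [hend, abs_sub_comm]
    exact (lt_of_not_ge fun h => hx (mem_Icc_iff_abs_le.1 h)).le

lemma volume_setOf_lt_window_le_unifIcc {β γ : ℝ} (hβ : 0 < β) (hγ : 0 ≤ γ) {ν : Measure ℝ}
    [IsProbabilityMeasure ν] {a b : ℝ}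
    (hν : ν ≤ (β⁻¹.toNNReal : ℝ≥0∞) • volume.restrict (Icc a b)) (c : ℝ) {t t' : ℝ} (ht : 0 < t)
    (htt' : t < t')
    (hlt : volume {x | t < window ν γ x}
      < volume {x | t < window (unifIcc (c - β / 2) (c + β / 2)) γ x}) :
    volume {x | t' < window ν γ x}
      ≤ volume {x | t' < window (unifIcc (c - β / 2) (c + β / 2)) γ x} := by
  rcases eq_empty_or_nonempty {x | t' < window ν γ x} with hempty | hne
  · simp [hempty]
  have hK : ((β⁻¹.toNNReal : ℝ≥0) : ℝ) = β⁻¹ := Real.coe_toNNReal _ (inv_nonneg.2 hβ.le)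
  have hνle : ν ≤ (β⁻¹.toNNReal : ℝ≥0∞) • volume :=
    hν.trans (smul_le_smul_left _ Measure.restrict_le_self)
  obtain ⟨x, hx⟩ := hne
  have ht'₁ : t' < 1 := hx.trans_le (window_le_one x)
  have ht'γ : β * t' < 2 * γ := by
    have := hx.trans_le (window_le_mul hγ hνle x)
    rwa [hK, lt_inv_mul_iff₀ hβ] at this
  have hgrow := volume_setOf_lt_add_le (by simpa using hβ) (lipschitzWith_window hνle) htt'.le
    ⟨x, hx⟩ ((Metric.isBounded_Icc _ _).subset (setOf_lt_window_subset (by linarith) hν))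
  have htight : volume {x | t < window (unifIcc (c - β / 2) (c + β / 2)) γ x}
      = volume {x | t' < window (unifIcc (c - β / 2) (c + β / 2)) γ x}
        + ENNReal.ofReal (2 * ((t' - t) / (β⁻¹.toNNReal : ℝ≥0))) := by
    rw [volume_setOf_lt_window_unifIcc hβ c γ ht (by linarith) (by nlinarith),
      volume_setOf_lt_window_unifIcc hβ c γ (ht.trans htt') ht'₁ ht'γ, hK, div_inv_eq_mul,
      ← ENNReal.ofReal_add (by nlinarith) (by nlinarith)]
    ring_nf
  exact ((ENNReal.add_lt_add_iff_right ENNReal.ofReal_ne_top).1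
    (hgrow.trans_lt (hlt.trans_eq htight))).le

theorem lintegral_measure_Icc_tsub_le_unifIcc {β γ : ℝ} (hβ : 0 < β) (hγ : 0 ≤ γ)
    {ν : Measure ℝ} [IsProbabilityMeasure ν] {a b : ℝ}
    (hν : ν ≤ (β⁻¹.toNNReal : ℝ≥0∞) • volume.restrict (Icc a b)) (c : ℝ) {s : ℝ} (hs : 0 ≤ s) :
    ∫⁻ x, (ν (Icc (x - γ) (x + γ)) - ENNReal.ofReal s)
      ≤ ∫⁻ x, (unifIcc (c - β / 2) (c + β / 2) (Icc (x - γ) (x + γ)) - ENNReal.ofReal s) := by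
  set v := unifIcc (c - β / 2) (c + β / 2)
  have := isProbabilityMeasure_unifIcc (show c - β / 2 < c + β / 2 by linarith)
  have hνle : ν ≤ (β⁻¹.toNNReal : ℝ≥0∞) • volume :=
    hν.trans (smul_le_smul_left _ Measure.restrict_le_self)
  have hvle : v ≤ (β⁻¹.toNNReal : ℝ≥0∞) • volume := by
    have := unifIcc_le_smul_volume (show c - β / 2 < c + β / 2 by linarith)
    rwa [show c + β / 2 - (c - β / 2) = β by ring] at this
  simp_rw [← ofReal_window]
  refine lintegral_tsub_le_of_lintegral_min_le (measurable_window hνle).ennreal_ofReal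
    (measurable_window hvle).ennreal_ofReal _
    (by rw [lintegral_ofReal_window, lintegral_ofReal_window])
    (by rw [lintegral_ofReal_window]; exact ENNReal.ofReal_ne_top) ?_
  simp_rw [← ENNReal.ofReal_min]
  rw [lintegral_ofReal_min_eq volume (fun _ => window_nonneg _) (measurable_window hvle) hs,
    lintegral_ofReal_min_eq volume (fun _ => window_nonneg _) (measurable_window hνle) hs]
  refine setLIntegral_Ioo_le_of_crossing s
    (by rw [lintegral_volume_setOf_lt_window hvle, lintegral_volume_setOf_lt_window hνle])
    (by rw [lintegral_volume_setOf_lt_window hvle]; exact ENNReal.ofReal_ne_top)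
    fun t t' ht htt' hlt => volume_setOf_lt_window_le_unifIcc hβ hγ hν c ht htt' hlt

theorem max_prob_close_uniform_general
    (α β γ : ℝ) (hα : α ∈ Ioc (0:ℝ) 1) (hβ : β ∈ Ioc (0:ℝ) 1) (hγ : 0 < γ)
    (fX fY : ℝ → ℝ)
    (hfX0 : ∀ x, 0 ≤ fX x) (hfY0 : ∀ y, 0 ≤ fY y)
    (hfXb : ∀ x, fX x ≤ α⁻¹ * Set.indicator (Icc (0:ℝ) 1) (1 : ℝ → ℝ) x)
    (hfYb : ∀ y, fY y ≤ β⁻¹ * Set.indicator (Icc (0:ℝ) 1) (1 : ℝ → ℝ) y)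
    (hfX1 : ∫ x, fX x = 1) (hfY1 : ∫ y, fY y = 1) :
    ((volume.withDensity fun x => ENNReal.ofReal (fX x)).prod
        (volume.withDensity fun y => ENNReal.ofReal (fY y)))
      {p : ℝ × ℝ | |p.1 - p.2| ≤ γ} ≤
    ((unifIcc ((1 - α) / 2) ((1 + α) / 2)).prod
        (unifIcc ((1 - β) / 2) ((1 + β) / 2)))
      {p : ℝ × ℝ | |p.1 - p.2| ≤ γ} := by
  set μ := volume.withDensity fun x => ENNReal.ofReal (fX x)
  set ν := volume.withDensity fun y => ENNReal.ofReal (fY y)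
  have : IsProbabilityMeasure μ := isProbabilityMeasure_withDensity_ofReal hfX0 hfX1
  have : IsProbabilityMeasure ν := isProbabilityMeasure_withDensity_ofReal hfY0 hfY1
  have hcenter : ∀ δ : ℝ, (1 - δ) / 2 = 1 / 2 - δ / 2 ∧ (1 + δ) / 2 = 1 / 2 + δ / 2 :=
    fun δ => ⟨by ring, by ring⟩
  rw [prod_strip_eq_lintegral, prod_strip_eq_lintegral, (hcenter α).1, (hcenter α).2,
    (hcenter β).1, (hcenter β).2, lintegral_unifIcc_window_eq hα.1 hβ.1]
  set s := window (unifIcc (1 / 2 - β / 2) (1 / 2 + β / 2)) γ (1 / 2 + α / 2)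
  calc ∫⁻ x, ν (Icc (x - γ) (x + γ)) ∂μ
      ≤ ENNReal.ofReal s
          + ENNReal.ofReal α⁻¹ * ∫⁻ x, (ν (Icc (x - γ) (x + γ)) - ENNReal.ofReal s) :=
        lintegral_le_add_mul_lintegral_tsub ((withDensity_ofReal_le_smul_restrict
          measurableSet_Icc hfXb).trans (smul_le_smul_left _ Measure.restrict_le_self)) _ _
    _ ≤ _ := by
        gcongr _ + _ * ?_
        exact lintegral_measure_Icc_tsub_le_unifIcc hβ.1 hγ.le
          (withDensity_ofReal_le_smul_restrict measurableSet_Icc hfYb) _ (window_nonneg _)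

/-- (Lemma: among pairs of independent random variables with densities
bounded by `α⁻¹ 1_{[0,1]}` and `β⁻¹ 1_{[0,1]}` respectively, the probability
`P(|X - Y| ≤ γ)` is maximized by `X ∼ U((1-α)/2, (1+α)/2)` and `Y ∼ U((1-β)/2, (1+β)/2)`). -/
theorem max_prob_close_uniform
    (α β γ : ℝ) (hα : α ∈ Ioc (0:ℝ) 1) (hβ : β ∈ Ioc (0:ℝ) 1) (hγ : 0 < γ)
    (fX fY : ℝ → ℝ) (hfXm : Measurable fX) (hfYm : Measurable fY)
    (hfX0 : ∀ x, 0 ≤ fX x) (hfY0 : ∀ y, 0 ≤ fY y)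
    (hfXb : ∀ x, fX x ≤ α⁻¹ * Set.indicator (Icc (0:ℝ) 1) (1 : ℝ → ℝ) x)
    (hfYb : ∀ y, fY y ≤ β⁻¹ * Set.indicator (Icc (0:ℝ) 1) (1 : ℝ → ℝ) y)
    (hfX1 : ∫ x, fX x = 1) (hfY1 : ∫ y, fY y = 1) :
    ((volume.withDensity fun x => ENNReal.ofReal (fX x)).prod
        (volume.withDensity fun y => ENNReal.ofReal (fY y)))
      {p : ℝ × ℝ | |p.1 - p.2| ≤ γ} ≤
    ((unifIcc ((1 - α) / 2) ((1 + α) / 2)).prod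
        (unifIcc ((1 - β) / 2) ((1 + β) / 2)))
      {p : ℝ × ℝ | |p.1 - p.2| ≤ γ} :=
  max_prob_close_uniform_general α β γ hα hβ hγ fX fY hfX0 hfY0 hfXb hfYb hfX1 hfY1
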